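/- Let G = (V,E) be a graph with V = {v_1, …, v_n}, n ≥ 2, let (X, Y, d) be the associated MCC instance, let α ≥ log₂ n, and let k be a positive integer with k ≤ n. If there is a finite collection of balls, each centered at a point of Y and with a nonnegative real radius, whose union contains X and whose cost Σ r^α is at most k, then G has a dominating set of size at most k. -/
import Mathlib


open scoped Classical

/-- The distance function of the MCC instance associated to a graph `G`:
clients `x_i = Sum.inl i`, servers `y_j = Sum.inr j`. -/
noncomputable def mccDist (n : ℕ) (G : SimpleGraph (Fin n)) :
    (Fin n ⊕ Fin n) → (Fin n ⊕ Fin n) → ℝ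
  | Sum.inl i, Sum.inl j => if i = j then 0 else 2
  | Sum.inr i, Sum.inr j => if i = j then 0 else 2
  | Sum.inl i, Sum.inr j => if i = j ∨ G.Adj i j then 1 else 3
  | Sum.inr j, Sum.inl i => if i = j ∨ G.Adj i j then 1 else 3

/-- Let `G` be a graph on `n ≥ 2` vertices, `α ≥ log₂ n`, and `1 ≤ k ≤ n`.
If there is a finite collection of balls (encoded as pairs of a server index
and a nonnegative radius), centered at points of `Y`, whose union contains
the client set `X` and whose cost `Σ r^α` is at most `k`, then `G` has a
dominating set of size at most `k`. -/
theorem cover_gives_dominating_set (n : ℕ) (hn : 2 ≤ n)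
    (G : SimpleGraph (Fin n)) (α : ℝ) (hα : Real.logb 2 (n : ℝ) ≤ α)
    (k : ℕ) (hk0 : 1 ≤ k) (hkn : k ≤ n)
    (O : Finset (Fin n × ℝ))
    (hOr : ∀ br ∈ O, 0 ≤ br.2)
    (hOcover : ∀ i : Fin n, ∃ br ∈ O, mccDist n G (Sum.inl i) (Sum.inr br.1) ≤ br.2)
    (hOcost : (∑ br ∈ O, br.2 ^ α) ≤ (k : ℝ)) :
    ∃ J : Finset (Fin n),
      (∀ v : Fin n, v ∉ J → ∃ u ∈ J, G.Adj v u) ∧ J.card ≤ k := by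
  have hn2 : (2:ℝ) ≤ (n:ℝ) := by exact_mod_cast hn
  have hαpos : (0:ℝ) < α := by
    have h1 : (1:ℝ) ≤ Real.logb 2 n := by
      rw [Real.le_logb_iff_rpow_le (by norm_num) (by linarith)]
      simpa using hn2
    linarith
  -- 2 ^ α ≥ n
  have h2α : (n:ℝ) ≤ (2:ℝ) ^ α := by
    have := Real.rpow_logb (show (0:ℝ) < 2 by norm_num) (by norm_num)
      (show (0:ℝ) < n by linarith)
    calc (n:ℝ) = (2:ℝ) ^ Real.logb 2 n := this.symm
      _ ≤ (2:ℝ) ^ α := Real.rpow_le_rpow_left_iff (by norm_num) |>.mpr hα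
  have h3α : (k:ℝ) < (3:ℝ) ^ α := by
    have hkn' : (k:ℝ) ≤ (n:ℝ) := by exact_mod_cast hkn
    have : (2:ℝ) ^ α < (3:ℝ) ^ α :=
      Real.rpow_lt_rpow (by norm_num) (by norm_num) hαpos
    linarith
  set F : Finset (Fin n × ℝ) := O.filter (fun br => 1 ≤ br.2) with hF
  refine ⟨F.image Prod.fst, ?_, ?_⟩
  · intro v hv
    obtain ⟨br, hbrO, hbr⟩ := hOcover v
    have hd : mccDist n G (Sum.inl v) (Sum.inr br.1) =
        if v = br.1 ∨ G.Adj v br.1 then 1 else 3 := rfl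
    by_cases hadj : v = br.1 ∨ G.Adj v br.1
    · have hr1 : 1 ≤ br.2 := by rw [hd, if_pos hadj] at hbr; exact hbr
      have hmem : br.1 ∈ F.image Prod.fst :=
        Finset.mem_image.mpr ⟨br, Finset.mem_filter.mpr ⟨hbrO, hr1⟩, rfl⟩
      rcases hadj with h | h
      · exact absurd (h ▸ hmem) hv
      · exact ⟨br.1, hmem, h⟩
    · exfalso
      have hr3 : 3 ≤ br.2 := by rw [hd, if_neg hadj] at hbr; exact hbr
      have h1 : (3:ℝ) ^ α ≤ br.2 ^ α :=
        Real.rpow_le_rpow (by norm_num) hr3 hαpos.le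
      have h2 : br.2 ^ α ≤ ∑ cr ∈ O, cr.2 ^ α := by
        refine Finset.single_le_sum (f := fun cr : Fin n × ℝ => cr.2 ^ α) (fun cr hcr => ?_) hbrO
        exact Real.rpow_nonneg (hOr cr hcr) α
      linarith
  · have hcard : ((F.card : ℝ)) ≤ (k:ℝ) := by
      have hsum1 : (F.card : ℝ) ≤ ∑ br ∈ F, br.2 ^ α := by
        have := Finset.sum_le_sum (s := F) (f := fun _ : Fin n × ℝ => (1:ℝ))
          (g := fun br => br.2 ^ α)
          (fun br hbr => Real.one_le_rpow (Finset.mem_filter.mp hbr).2 hαpos.le)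
        simpa using this
      have hsub : ∑ br ∈ F, br.2 ^ α ≤ ∑ br ∈ O, br.2 ^ α := by
        refine Finset.sum_le_sum_of_subset_of_nonneg (Finset.filter_subset _ _)
          (fun br hbr _ => Real.rpow_nonneg (hOr br hbr) α)
      calc (F.card : ℝ) ≤ ∑ br ∈ F, br.2 ^ α := hsum1
        _ ≤ ∑ br ∈ O, br.2 ^ α := hsub
        _ ≤ (k:ℝ) := hOcost
    have : F.card ≤ k := by exact_mod_cast hcard
    exact le_trans (Finset.card_image_le) this
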